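/- Let E and E₁ be finite-dimensional real inner product spaces, A : E → E₁ a surjective linear map with adjoint A*, f ∈ E₁, and J : E → [0, ∞) such that v ↦ J(v) + ω₀‖v‖² is convex for some ω₀ > 0. Define the subdifferential ∂J(v) := {ξ ∈ E : ξ + 2ω₀ v is a subgradient of the convex function w ↦ J(w) + ω₀‖w‖² at v}, and assume the growth condition: there exist K, L ≥ 0 such that ‖ξ‖ ≤ K J(v) + L for every v ∈ E and every ξ ∈ ∂J(v). Let ω > 0 and suppose the sequences (v_ℓ)_{ℓ≥0} in E and (q_ℓ)_{ℓ≥1} in E₁ satisfy: A*q_ℓ − 2ω(v_ℓ − v_{ℓ-1}) ∈ ∂J(v_ℓ) for all ℓ ≥ 1; A v_ℓ → f; v_ℓ − v_{ℓ-1} → 0; and (v_ℓ) is bounded. Then every cluster point v of (v_ℓ) satisfies Av = f and ∂J(v) ∩ ran(A*) ≠ ∅, i.e., v is a constrained critical point of J on the affine space {w ∈ E : Aw = f}. -/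

import Mathlib

/-!
Along a subsequence `v (φ n) → x` the shifted iterates `v (φ n + 1)` converge to `x` as well,
because consecutive differences vanish. By the growth condition the subgradients
`ξₙ = A* q - 2ω (v (φ n + 1) - v (φ n))` are dominated by the convergent quantities
`K J(v (φ n + 1)) + L` (`J` is continuous, being a convex function minus `ω₀‖·‖²`), so a further
subsequence converges to some `ξ`. Since `A* q` differs from `ξₙ` by a vanishing term, `ξ` lies in
the closed subspace `ran A*`, and the subgradient inequality of the convex function
`J + ω₀‖·‖²` passes to the limit.
-/

open RealInnerProductSpace Filter Topology

section Subgradient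

variable {E : Type*} [NormedAddCommGroup E] [InnerProductSpace ℝ E]

def IsSubgradientAt (G : E → ℝ) (x g : E) : Prop :=
  ∀ w, G x + ⟪g, w - x⟫ ≤ G w

theorem IsSubgradientAt.of_tendsto {G : E → ℝ} (hG : Continuous G) {x g : E} {y h : ℕ → E}
    (hy : Tendsto y atTop (𝓝 x)) (hh : Tendsto h atTop (𝓝 g))
    (hsub : ∀ n, IsSubgradientAt G (y n) (h n)) : IsSubgradientAt G x g := fun w =>
  le_of_tendsto' (((hG.tendsto x).comp hy).add (hh.inner (tendsto_const_nhds.sub hy)))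
    fun n => hsub n w

end Subgradient

theorem continuous_of_convexOn_add_mul_norm_sq {E : Type*} [NormedAddCommGroup E]
    [NormedSpace ℝ E] [FiniteDimensional ℝ E] {J : E → ℝ} {c : ℝ}
    (hconv : ConvexOn ℝ Set.univ fun v => J v + c * ‖v‖ ^ 2) : Continuous J := by
  have hG : Continuous fun v => J v + c * ‖v‖ ^ 2 :=
    continuousOn_univ.mp (hconv.continuousOn isOpen_univ)
  exact (hG.sub ((continuous_norm.pow 2).const_mul c)).congr fun v => by simp

theorem tendsto_comp_add_one_of_tendsto_sub {E : Type*} [NormedAddCommGroup E] {v : ℕ → E}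
    {φ : ℕ → ℕ} (hφ : Tendsto φ atTop atTop) {x : E} (hvx : Tendsto (v ∘ φ) atTop (𝓝 x))
    (hdiff : Tendsto (fun ℓ => v (ℓ + 1) - v ℓ) atTop (𝓝 0)) :
    Tendsto (fun n => v (φ n + 1)) atTop (𝓝 x) := by
  simpa using (hdiff.comp hφ).add hvx

theorem exists_subseq_tendsto_of_norm_le_of_tendsto {E : Type*} [NormedAddCommGroup E]
    [ProperSpace E] {ξ : ℕ → E} {b : ℕ → ℝ} {c : ℝ} (hb : Tendsto b atTop (𝓝 c))
    (hξb : ∀ n, ‖ξ n‖ ≤ b n) :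
    ∃ a, ∃ ψ : ℕ → ℕ, StrictMono ψ ∧ Tendsto (ξ ∘ ψ) atTop (𝓝 a) := by
  obtain ⟨C, hC⟩ := hb.bddAbove_range
  obtain ⟨a, -, ψ, hψ, hξψ⟩ := tendsto_subseq_of_bounded (Metric.isBounded_closedBall)
    (x := ξ) (s := Metric.closedBall 0 C)
    fun n => mem_closedBall_zero_iff.mpr ((hξb n).trans (hC ⟨n, rfl⟩))
  exact ⟨a, ψ, hψ, hξψ⟩

theorem statement6 {E E₁ : Type*}
    [NormedAddCommGroup E] [InnerProductSpace ℝ E] [FiniteDimensional ℝ E]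
    [NormedAddCommGroup E₁] [InnerProductSpace ℝ E₁] [FiniteDimensional ℝ E₁]
    (A : E →ₗ[ℝ] E₁) (f : E₁)
    (J : E → ℝ)
    (ω₀ ω : ℝ)
    (hconv : ConvexOn ℝ Set.univ (fun v => J v + ω₀ * ‖v‖ ^ 2))
    (K L : ℝ)
    (hgrowth : ∀ (x ξ : E),
      (∀ w, (J x + ω₀ * ‖x‖ ^ 2) + ⟪ξ + (2 * ω₀) • x, w - x⟫ ≤ J w + ω₀ * ‖w‖ ^ 2) →
      ‖ξ‖ ≤ K * J x + L)
    (v : ℕ → E) (q : ℕ → E₁)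
    (hsub : ∀ ℓ : ℕ, ∀ w,
      (J (v (ℓ + 1)) + ω₀ * ‖v (ℓ + 1)‖ ^ 2) +
        ⟪((LinearMap.adjoint A) (q (ℓ + 1)) - (2 * ω) • (v (ℓ + 1) - v ℓ)) +
            (2 * ω₀) • v (ℓ + 1), w - v (ℓ + 1)⟫ ≤
        J w + ω₀ * ‖w‖ ^ 2)
    (hAf : Filter.Tendsto (fun ℓ => A (v ℓ)) Filter.atTop (nhds f))
    (hdiff : Filter.Tendsto (fun ℓ => v (ℓ + 1) - v ℓ) Filter.atTop (nhds 0)) :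
    ∀ x : E, (∃ φ : ℕ → ℕ, StrictMono φ ∧
        Filter.Tendsto (fun n => v (φ n)) Filter.atTop (nhds x)) →
      A x = f ∧ ∃ ξ : E,
        (∀ w, (J x + ω₀ * ‖x‖ ^ 2) + ⟪ξ + (2 * ω₀) • x, w - x⟫ ≤ J w + ω₀ * ‖w‖ ^ 2) ∧
        ξ ∈ LinearMap.range (LinearMap.adjoint A) := by
  rintro x ⟨φ, hφ, hvx⟩
  set G : E → ℝ := fun v => J v + ω₀ * ‖v‖ ^ 2
  set ξs : ℕ → E := fun n =>
    LinearMap.adjoint A (q (φ n + 1)) - (2 * ω) • (v (φ n + 1) - v (φ n))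
  have hJ : Continuous J := continuous_of_convexOn_add_mul_norm_sq hconv
  have hG : Continuous G := hJ.add ((continuous_norm.pow 2).const_mul ω₀)
  have hv1 := tendsto_comp_add_one_of_tendsto_sub hφ.tendsto_atTop hvx hdiff
  have hξsub (n : ℕ) : IsSubgradientAt G (v (φ n + 1)) (ξs n + (2 * ω₀) • v (φ n + 1)) :=
    hsub (φ n)
  obtain ⟨ξ, ψ, hψ, hξ⟩ := exists_subseq_tendsto_of_norm_le_of_tendsto
    ((tendsto_const_nhds.mul ((hJ.tendsto x).comp hv1)).add_const L)
    fun n => hgrowth _ _ (hξsub n)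
  have hAx : A x = f := tendsto_nhds_unique
    ((A.continuous_of_finiteDimensional.tendsto x).comp hvx) (hAf.comp hφ.tendsto_atTop)
  have hv1ψ := hv1.comp hψ.tendsto_atTop
  have hξG : IsSubgradientAt G x (ξ + (2 * ω₀) • x) :=
    .of_tendsto hG hv1ψ (hξ.add (hv1ψ.const_smul _)) fun n => hξsub (ψ n)
  have hAq : Tendsto (fun n => LinearMap.adjoint A (q (φ (ψ n) + 1))) atTop (𝓝 ξ) := by
    simpa [ξs] using hξ.add
      (((hdiff.comp hφ.tendsto_atTop).comp hψ.tendsto_atTop).const_smul (2 * ω))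
  exact ⟨hAx, ξ, hξG, (Submodule.closed_of_finiteDimensional _).mem_of_tendsto hAq
    (.of_forall fun n => LinearMap.mem_range_self _ _)⟩
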